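/- arXiv:2503.01188 — 3 statements merged into one kernel-verified Lean document; each statement's English description precedes it below -/
import Mathlib

section
/- Let (X, Y) be an admissible balanced pair in an abelian category A. Then a complex over A is right X-acyclic (i.e., Hom_A(X, −) applied to it is acyclic for every X in the class X) if and only if it is left Y-acyclic (i.e., Hom_A(−, Y) applied to it is acyclic for every Y in Y). -/
open CategoryTheory Category Limits ZeroObject

universe v u

namespace Paper

variable {A : Type u} [Category.{v} A] [Abelian A]

/-- Chain complexes over `A` indexed by `ℤ` (homological convention). -/
abbrev Cx (A : Type u) [Category.{v} A] [Abelian A] := ChainComplex A ℤ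

/-- A chain map is null homotopic if it is homotopic to the zero map. -/
def NullHomotopic {X Y : Cx A} (f : X ⟶ Y) : Prop := Nonempty (Homotopy f 0)

/-- A complex is contractible if its identity is null homotopic. -/
def Contractible (X : Cx A) : Prop := Nonempty (Homotopy (𝟙 X) (0 : X ⟶ X))

/-- `Hom_A(X, E)` is exact at degree `n` for every `X ∈ 𝒳`. -/
def RightAcyclicAt (𝒳 : Set A) (E : Cx A) (n : ℤ) : Prop :=
  ∀ ⦃X : A⦄, X ∈ 𝒳 → ∀ g : X ⟶ E.X n, g ≫ E.d n (n - 1) = 0 →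
    ∃ h : X ⟶ E.X (n + 1), h ≫ E.d (n + 1) n = g

/-- The complex `E` is right `𝒳`-acyclic. -/
def RightAcyclic (𝒳 : Set A) (E : Cx A) : Prop := ∀ n : ℤ, RightAcyclicAt 𝒳 E n

/-- `Hom_A(E, Y)` is exact at (cohomological) degree `n` for every `Y ∈ 𝒴`. -/
def LeftAcyclicAt (𝒴 : Set A) (E : Cx A) (n : ℤ) : Prop :=
  ∀ ⦃Y : A⦄, Y ∈ 𝒴 → ∀ g : E.X n ⟶ Y, E.d (n + 1) n ≫ g = 0 →
    ∃ h : E.X (n - 1) ⟶ Y, E.d n (n - 1) ≫ h = g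

/-- The complex `E` is left `𝒴`-acyclic. -/
def LeftAcyclic (𝒴 : Set A) (E : Cx A) : Prop := ∀ n : ℤ, LeftAcyclicAt 𝒴 E n

/-- `f : X ⟶ M` is a right `𝒳`-approximation of `M`. -/
def IsRightApprox (𝒳 : Set A) {X M : A} (f : X ⟶ M) : Prop :=
  ∀ ⦃X' : A⦄, X' ∈ 𝒳 → ∀ g : X' ⟶ M, ∃ h : X' ⟶ X, h ≫ f = g

/-- `f : M ⟶ Y` is a left `𝒴`-approximation of `M`. -/
def IsLeftApprox (𝒴 : Set A) {M Y : A} (f : M ⟶ Y) : Prop :=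
  ∀ ⦃Y' : A⦄, Y' ∈ 𝒴 → ∀ g : M ⟶ Y', ∃ h : Y ⟶ Y', f ≫ h = g

/-- `R` is an augmented `𝒳`-resolution of `M`:  `⋯ → X₁ → X₀ → M → 0`, with the
`𝒳`-objects placed in degrees `≥ 0` and `M` in degree `-1`. -/
def IsAugXRes (𝒳 : Set A) (M : A) (R : Cx A) : Prop :=
  (∀ n : ℤ, 0 ≤ n → R.X n ∈ 𝒳) ∧ (∀ n : ℤ, n < -1 → IsZero (R.X n)) ∧
    Nonempty (R.X (-1) ≅ M)

/-- `R` is an augmented `𝒴`-coresolution of `M`: `0 → M → Y⁰ → Y¹ → ⋯`, with `M` in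
degree `0` and the `𝒴`-objects in degrees `≤ -1`. -/
def IsAugYCores (𝒴 : Set A) (M : A) (R : Cx A) : Prop :=
  (∀ n : ℤ, n ≤ -1 → R.X n ∈ 𝒴) ∧ (∀ n : ℤ, 0 < n → IsZero (R.X n)) ∧
    Nonempty (R.X 0 ≅ M)

/-- A balanced pair `(𝒳, 𝒴)` of (full additive, isomorphism- and summand-closed)
subcategories of `A`. -/
structure BalancedPair (𝒳 𝒴 : Set A) : Prop where
  isoClosedX : ∀ ⦃X X' : A⦄, X ∈ 𝒳 → (X ≅ X') → X' ∈ 𝒳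
  isoClosedY : ∀ ⦃Y Y' : A⦄, Y ∈ 𝒴 → (Y ≅ Y') → Y' ∈ 𝒴
  summandClosedX : ∀ ⦃X S : A⦄, X ∈ 𝒳 → ∀ (s : S ⟶ X) (r : X ⟶ S), s ≫ r = 𝟙 S → S ∈ 𝒳
  summandClosedY : ∀ ⦃Y S : A⦄, Y ∈ 𝒴 → ∀ (s : S ⟶ Y) (r : Y ⟶ S), s ≫ r = 𝟙 S → S ∈ 𝒴
  contravariantlyFinite : ∀ M : A, ∃ X ∈ 𝒳, ∃ f : X ⟶ M, IsRightApprox 𝒳 f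
  covariantlyFinite : ∀ M : A, ∃ Y ∈ 𝒴, ∃ f : M ⟶ Y, IsLeftApprox 𝒴 f
  resolution : ∀ M : A, ∃ R : Cx A, IsAugXRes 𝒳 M R ∧ RightAcyclic 𝒳 R ∧ LeftAcyclic 𝒴 R
  coresolution : ∀ M : A, ∃ R : Cx A, IsAugYCores 𝒴 M R ∧ RightAcyclic 𝒳 R ∧ LeftAcyclic 𝒴 R

/-- The balanced pair `(𝒳, 𝒴)` is admissible: every right `𝒳`-approximation is epic and
every left `𝒴`-approximation is monic. -/
def Admissible (𝒳 𝒴 : Set A) : Prop :=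
  (∀ ⦃X M : A⦄, X ∈ 𝒳 → ∀ f : X ⟶ M, IsRightApprox 𝒳 f → Epi f) ∧
  (∀ ⦃M Y : A⦄, Y ∈ 𝒴 → ∀ f : M ⟶ Y, IsLeftApprox 𝒴 f → Mono f)

/-- A short exact sequence of `A` belonging to the exact structure `E` induced by `𝒳`:
it is exact and remains exact after applying `Hom_A(X, -)` for every `X ∈ 𝒳`. -/
def EExact (𝒳 : Set A) {D W C : A} (i : D ⟶ W) (p : W ⟶ C) : Prop :=
  ∃ w : i ≫ p = 0, (ShortComplex.mk i p w).ShortExact ∧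
    ∀ ⦃X : A⦄, X ∈ 𝒳 → ∀ g : X ⟶ C, ∃ h : X ⟶ W, h ≫ p = g

/-- A short exact sequence of complexes which is degreewise in `E`. -/
def ChEExact (𝒳 : Set A) {D W C : Cx A} (i : D ⟶ W) (p : W ⟶ C) : Prop :=
  ∀ n : ℤ, EExact 𝒳 (i.f n) (p.f n)

/-- Vanishing of `Ext¹` in the exact category `Ch(A, E)`: every admissible short exact
sequence `0 → D → W → C → 0` in `Ch(A, E)` splits. -/
def Ext1ChVanish (𝒳 : Set A) (C D : Cx A) : Prop :=
  ∀ ⦃W : Cx A⦄ (i : D ⟶ W) (p : W ⟶ C), ChEExact 𝒳 i p → ∃ r : W ⟶ D, i ≫ r = 𝟙 D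

/-- The class `Ẽ` of right `𝒳`-acyclic complexes. -/
def Etilde (𝒳 : Set A) : Set (Cx A) := {E | RightAcyclic 𝒳 E}

/-- The class `E-dw X̃` of complexes with all terms in `𝒳`. -/
def dwX (𝒳 : Set A) : Set (Cx A) := {G | ∀ n : ℤ, G.X n ∈ 𝒳}

/-- The class `E-dg X̃`: complexes with terms in `𝒳` such that every chain map to a right
`𝒳`-acyclic complex is null homotopic. -/
def EdgX (𝒳 : Set A) : Set (Cx A) :=
  {G | (∀ n : ℤ, G.X n ∈ 𝒳) ∧ ∀ E ∈ Etilde 𝒳, ∀ f : G ⟶ E, NullHomotopic f}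

/-- The right `Ext¹`-orthogonal class of `E-dw X̃` in `Ch(A, E)`. -/
def dwPerp (𝒳 : Set A) : Set (Cx A) := {C | ∀ G ∈ dwX 𝒳, Ext1ChVanish 𝒳 G C}

/-- The class `X̃_E` of right `𝒳`-acyclic complexes all of whose cycles lie in `𝒳`. -/
def XtildeE (𝒳 : Set A) : Set (Cx A) :=
  {G | RightAcyclic 𝒳 G ∧ ∀ n : ℤ, kernel (G.d n (n - 1)) ∈ 𝒳}

/-- The disk complex `Dⁿ(M)`: `M` in degrees `n` and `n - 1`, identity differential. -/
noncomputable def disk (M : A) (n : ℤ) : Cx A where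
  X k := if k = n ∨ k = n - 1 then M else 0
  d i j :=
    if h : i = n ∧ j = n - 1 then
      eqToHom (by simp [h.1, h.2])
    else 0
  shape i j hij := by
    rw [dif_neg]
    rintro ⟨rfl, rfl⟩
    exact hij (by rw [ComplexShape.down_Rel]; omega)
  d_comp_d' i j k _ _ := by
    by_cases h : j = n ∧ k = n - 1
    · rw [dif_neg (by rintro ⟨-, rfl⟩; omega : ¬(i = n ∧ j = n - 1)), zero_comp]
    · rw [dif_neg h, comp_zero]

/-- The shift `Σᵏ C`, with `(Σᵏ C)ₙ = C_{n-k}` and differential `(-1)ᵏ d`. -/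
@[simps] def shiftC (C : Cx A) (k : ℤ) : Cx A where
  X n := C.X (n - k)
  d i j := (k.negOnePow : ℤ) • C.d (i - k) (j - k)
  shape i j hij := by
    rw [C.shape, smul_zero]
    simp only [ComplexShape.down_Rel] at *
    omega
  d_comp_d' i j k _ _ := by
    rw [Preadditive.zsmul_comp, Preadditive.comp_zsmul, C.d_comp_d, smul_zero, smul_zero]

/-- Acyclicity of a complex. -/
def AcyclicCx (C : Cx A) : Prop := ∀ n : ℤ, C.ExactAt n

/-- Vanishing of the ordinary `Ext¹` in the abelian category `A`. -/
def Ext1Vanish (X Z : A) : Prop :=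
  ∀ ⦃W : A⦄ (i : Z ⟶ W) (p : W ⟶ X) (w : i ≫ p = 0),
    (ShortComplex.mk i p w).ShortExact → ∃ r : W ⟶ Z, i ≫ r = 𝟙 Z

/-- `(𝒻, 𝒞)` is a cotorsion pair in the abelian category `A`. -/
def CotorsionPair (𝒻 𝒞 : Set A) : Prop :=
  (∀ X : A, X ∈ 𝒻 ↔ ∀ Z ∈ 𝒞, Ext1Vanish X Z) ∧
  (∀ Z : A, Z ∈ 𝒞 ↔ ∀ X ∈ 𝒻, Ext1Vanish X Z)

/-- Completeness of a cotorsion pair. -/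
def CompletePair (𝒻 𝒞 : Set A) : Prop :=
  (∀ M : A, ∃ (Z F : A) (i : Z ⟶ F) (p : F ⟶ M) (w : i ≫ p = 0),
      (ShortComplex.mk i p w).ShortExact ∧ F ∈ 𝒻 ∧ Z ∈ 𝒞) ∧
  (∀ M : A, ∃ (Z F : A) (i : M ⟶ Z) (p : Z ⟶ F) (w : i ≫ p = 0),
      (ShortComplex.mk i p w).ShortExact ∧ Z ∈ 𝒞 ∧ F ∈ 𝒻)

/-- Heredity of a cotorsion pair. -/
def HereditaryPair (𝒻 𝒞 : Set A) : Prop :=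
  (∀ ⦃X Y Z : A⦄ (i : X ⟶ Y) (p : Y ⟶ Z) (w : i ≫ p = 0),
      (ShortComplex.mk i p w).ShortExact → Y ∈ 𝒻 → Z ∈ 𝒻 → X ∈ 𝒻) ∧
  (∀ ⦃X Y Z : A⦄ (i : X ⟶ Y) (p : Y ⟶ Z) (w : i ≫ p = 0),
      (ShortComplex.mk i p w).ShortExact → X ∈ 𝒞 → Y ∈ 𝒞 → Z ∈ 𝒞)

/-- A complete hereditary cotorsion triple `(𝒳, 𝒵, 𝒴)`. -/
def CotorsionTriple (𝒳 𝒵 𝒴 : Set A) : Prop :=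
  CotorsionPair 𝒳 𝒵 ∧ CotorsionPair 𝒵 𝒴 ∧
  CompletePair 𝒳 𝒵 ∧ CompletePair 𝒵 𝒴 ∧
  HereditaryPair 𝒳 𝒵 ∧ HereditaryPair 𝒵 𝒴

/-!
Admissibility forces a right `𝒳`-acyclic complex to be exact, and every map from an object
of `𝒳` to a cycle object `Zₙ` lifts to `Cₙ₊₁`; so the complex is spliced from short exact
sequences `0 → Zₙ → Cₙ → Zₙ₋₁ → 0` that stay exact under `Hom_A(X, -)`. The heart of the proof
is that such a sequence also stays exact under `Hom_A(-, Y)`: present its cokernel by the first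
step `0 → K → X₀ → M → 0` of an `𝒳`-resolution, which is `Hom_A(-, 𝒴)`-exact because the pair
is balanced; lifting `X₀ → M` exhibits the given sequence as the pushout of this one along a
map `K → Zₙ`, so every map `Zₙ → Y` extends. The converse is the same statement in `Aᵒᵖ`, where
`(𝒴ᵒᵖ, 𝒳ᵒᵖ)` is again an admissible balanced pair.
-/

def ExactHomFrom (𝒳 : Set A) (S : ShortComplex A) : Prop :=
  ∀ ⦃X : A⦄, X ∈ 𝒳 → ∀ x : X ⟶ S.X₂, x ≫ S.g = 0 → ∃ h : X ⟶ S.X₁, h ≫ S.f = x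

def ExactHomTo (𝒴 : Set A) (S : ShortComplex A) : Prop :=
  ∀ ⦃Y : A⦄, Y ∈ 𝒴 → ∀ y : S.X₂ ⟶ Y, S.f ≫ y = 0 → ∃ h : S.X₃ ⟶ Y, S.g ≫ h = y

theorem rightAcyclic_iff_exactHomFrom {𝒳 : Set A} {C : Cx A} :
    RightAcyclic 𝒳 C ↔ ∀ i j k, i = j + 1 → k = j - 1 → ExactHomFrom 𝒳 (C.sc' i j k) :=
  ⟨fun h i j k hi hk => by subst hi hk; exact h j, fun h n => h _ n _ rfl rfl⟩

theorem leftAcyclic_iff_exactHomTo {𝒴 : Set A} {C : Cx A} :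
    LeftAcyclic 𝒴 C ↔ ∀ i j k, i = j + 1 → k = j - 1 → ExactHomTo 𝒴 (C.sc' i j k) :=
  ⟨fun h i j k hi hk => by subst hi hk; exact h j, fun h n => h _ n _ rfl rfl⟩

theorem epi_of_isRightApprox {D : Type*} [Category D] {𝒳 : Set D}
    (hcov : ∀ M : D, ∃ X ∈ 𝒳, ∃ π : X ⟶ M, Epi π) {B M : D} {f : B ⟶ M}
    (hf : IsRightApprox 𝒳 f) : Epi f := by
  obtain ⟨X, hX, π, hπ⟩ := hcov M
  obtain ⟨t, rfl⟩ := hf hX π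
  exact epi_of_epi t f

section Approximations

variable {𝒳 𝒴 : Set A}

theorem ExactHomFrom.isRightApprox_kernelLift {S : ShortComplex A} (hS : ExactHomFrom 𝒳 S) :
    IsRightApprox 𝒳 (kernel.lift S.g S.f S.zero) := by
  intro X hX x
  obtain ⟨h, hh⟩ := hS hX (x ≫ kernel.ι S.g) (by simp)
  exact ⟨h, by ext; simpa using hh⟩

theorem ExactHomFrom.epi_kernelLift (hcov : ∀ M : A, ∃ X ∈ 𝒳, ∃ π : X ⟶ M, Epi π)
    {S : ShortComplex A} (hS : ExactHomFrom 𝒳 S) : Epi (kernel.lift S.g S.f S.zero) :=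
  epi_of_isRightApprox hcov hS.isRightApprox_kernelLift

theorem ExactHomFrom.exact (hcov : ∀ M : A, ∃ X ∈ 𝒳, ∃ π : X ⟶ M, Epi π)
    {S : ShortComplex A} (hS : ExactHomFrom 𝒳 S) : S.Exact :=
  S.exact_iff_epi_kernel_lift.2 (hS.epi_kernelLift hcov)

theorem exactHomTo_iff_isLeftApprox {X₁ X₂ X₃ I : A} {f : X₁ ⟶ X₂} {g : X₂ ⟶ X₃}
    {w : f ≫ g = 0} (hS : (ShortComplex.mk f g w).Exact) {e : X₂ ⟶ I} {m : I ⟶ X₃} [Epi e]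
    [Mono m] (hem : e ≫ m = g) : ExactHomTo 𝒴 (ShortComplex.mk f g w) ↔ IsLeftApprox 𝒴 m := by
  have hfe : f ≫ e = 0 := by rw [← cancel_mono m, assoc, hem, w, zero_comp]
  constructor
  · intro hS' Y hY y
    obtain ⟨h, hh⟩ := hS' hY (e ≫ y) (by rw [reassoc_of% hfe, zero_comp])
    exact ⟨h, by rw [← cancel_epi e, reassoc_of% hem, hh]⟩
  · intro hm Y hY y hy
    have hS₁ : (ShortComplex.mk f e hfe).Exact :=
      (ShortComplex.exact_iff_exact_up_to_refinements _).2 fun T x hx =>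
        hS.exact_up_to_refinements x (show x ≫ g = 0 by rw [← hem, reassoc_of% hx, zero_comp])
    obtain ⟨h, hh⟩ := hm hY (hS₁.desc y hy)
    exact ⟨h, show g ≫ h = y by rw [← hem, assoc, hh]; exact hS₁.g_desc y hy⟩

end Approximations

theorem exact_kernelι_kernelLift (S : ShortComplex A) :
    (ShortComplex.mk (kernel.ι S.f) (kernel.lift S.g S.f S.zero) (by ext; simp)).Exact :=
  ShortComplex.exact_of_f_is_kernel _
    (isKernelOfComp (kernel.ι S.g) S.f (kernelIsKernel S.f) _ (kernel.lift_ι _ _ _))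

theorem isPushout_of_exact {S₁ S₂ : ShortComplex A} (φ : S₁ ⟶ S₂) (h₁ : S₁.Exact) [Epi S₁.g]
    (h₂ : S₂.Exact) [Mono S₂.f] [IsIso φ.τ₃] : IsPushout S₁.f φ.τ₁ φ.τ₂ S₂.f := by
  have sq : CommSq S₁.f φ.τ₁ φ.τ₂ S₂.f := ⟨φ.comm₁₂.symm⟩
  have hexact : sq.shortComplex.Exact := by
    rw [ShortComplex.exact_iff_exact_up_to_refinements]
    rintro T (z : T ⟶ S₁.X₂ ⊞ S₂.X₁) (hz : z ≫ biprod.desc φ.τ₂ S₂.f = 0)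
    have hsum : z ≫ biprod.fst ≫ φ.τ₂ + z ≫ biprod.snd ≫ S₂.f = 0 := by
      simpa [biprod.desc_eq] using hz
    have hx : (z ≫ biprod.fst) ≫ S₁.g = 0 := by
      rw [← cancel_mono φ.τ₃]
      simpa [← φ.comm₂₃] using hsum =≫ S₂.g
    obtain ⟨T', π, hπ, x₀, hx₀⟩ := h₁.exact_up_to_refinements _ hx
    refine ⟨T', π, hπ, x₀, show π ≫ z = x₀ ≫ biprod.lift S₁.f (-φ.τ₁) from ?_⟩
    have hk : π ≫ z ≫ biprod.snd = -(x₀ ≫ φ.τ₁) := by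
      rw [eq_neg_iff_add_eq_zero, ← cancel_mono S₂.f, Preadditive.add_comp, zero_comp, add_comm]
      simpa [φ.comm₁₂, ← reassoc_of% hx₀] using π ≫= hsum
    apply biprod.hom_ext
    · simpa using hx₀
    · simpa using hk
  have hepi : Epi sq.shortComplex.g := by
    rw [epi_iff_surjective_up_to_refinements]
    rintro T (b : T ⟶ S₂.X₂)
    obtain ⟨T₁, π₁, hπ₁, x, hx⟩ :=
      surjective_up_to_refinements_of_epi S₁.g (b ≫ S₂.g ≫ inv φ.τ₃)
    have hb : (π₁ ≫ b - x ≫ φ.τ₂) ≫ S₂.g = 0 := by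
      simp [φ.comm₂₃, ← reassoc_of% hx]
    obtain ⟨T₂, π₂, hπ₂, k, hk⟩ := h₂.exact_up_to_refinements _ hb
    refine ⟨T₂, π₂ ≫ π₁, epi_comp _ _, biprod.lift (π₂ ≫ x) k,
      show (π₂ ≫ π₁) ≫ b = biprod.lift (π₂ ≫ x) k ≫ biprod.desc φ.τ₂ S₂.f from ?_⟩
    rw [Preadditive.comp_sub, sub_eq_iff_eq_add'] at hk
    rw [assoc, hk, biprod.lift_desc, assoc]
  exact ⟨sq, ⟨sq.isColimitEquivIsColimitCokernelCofork.symm hexact.gIsCokernel⟩⟩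

section Balanced

variable {𝒳 𝒴 : Set A}

theorem BalancedPair.exists_epi (hbp : BalancedPair 𝒳 𝒴) (hadm : Admissible 𝒳 𝒴) (M : A) :
    ∃ X ∈ 𝒳, ∃ π : X ⟶ M, Epi π := by
  obtain ⟨X, hX, π, hπ⟩ := hbp.contravariantlyFinite M
  exact ⟨X, hX, π, hadm.1 hX π hπ⟩

theorem BalancedPair.exists_presentation (hbp : BalancedPair 𝒳 𝒴) (hadm : Admissible 𝒳 𝒴)
    (M : A) : ∃ (K X : A) (κ : K ⟶ X) (ε : X ⟶ M) (w : κ ≫ ε = 0),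
      (ShortComplex.mk κ ε w).Exact ∧ Epi ε ∧ X ∈ 𝒳 ∧ IsLeftApprox 𝒴 κ := by
  have hcov := hbp.exists_epi hadm
  obtain ⟨R, ⟨hmem, hzero, ⟨φ⟩⟩, hR, hL⟩ := hbp.resolution M
  have hd : IsRightApprox 𝒳 (R.d 0 (-1)) := fun X hX x =>
    rightAcyclic_iff_exactHomFrom.1 hR 0 (-1) (-2) (by norm_num) (by norm_num) hX x
      ((hzero (-2) (by norm_num)).eq_of_tgt _ _)
  have : Epi (R.d 0 (-1)) := hadm.1 (hmem 0 le_rfl) _ hd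
  have hS : ExactHomFrom 𝒳 (R.sc' 1 0 (-1)) :=
    rightAcyclic_iff_exactHomFrom.1 hR 1 0 (-1) (by norm_num) (by norm_num)
  refine ⟨_, _, kernel.ι (R.d 0 (-1)), R.d 0 (-1) ≫ φ.hom, by simp,
    ShortComplex.exact_of_f_is_kernel _ (isKernelCompMono (kernelIsKernel _) φ.hom rfl),
    epi_comp _ _, hmem 0 le_rfl, ?_⟩
  have : Epi (kernel.lift (R.d 0 (-1)) (R.d 1 0) (R.d_comp_d _ _ _)) := hS.epi_kernelLift hcov
  have hS' := rightAcyclic_iff_exactHomFrom.1 hR 2 1 0 (by norm_num) (by norm_num)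
  exact (exactHomTo_iff_isLeftApprox (hS'.exact hcov) (kernel.lift_ι _ _ _)).1
    (leftAcyclic_iff_exactHomTo.1 hL 2 1 0 (by norm_num) (by norm_num))

theorem BalancedPair.isLeftApprox_of_isRightApprox (hbp : BalancedPair 𝒳 𝒴)
    (hadm : Admissible 𝒳 𝒴) {S : ShortComplex A} (hS : S.Exact) [Mono S.f]
    (hg : IsRightApprox 𝒳 S.g) : IsLeftApprox 𝒴 S.f := by
  intro Y hY f
  obtain ⟨K, X, κ, ε, w, hκε, hε, hX, hκ⟩ := hbp.exists_presentation hadm S.X₃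
  obtain ⟨l, hl⟩ := hg hX ε
  let τ := hS.lift (κ ≫ l) (by rw [assoc, hl, w])
  obtain ⟨σ, hσ⟩ := hκ hY (τ ≫ f)
  let φ : ShortComplex.mk κ ε w ⟶ S :=
    ShortComplex.homMk τ l (𝟙 _) (hS.lift_f _ _) (by simpa using hl)
  have : IsIso φ.τ₃ := inferInstanceAs (IsIso (𝟙 _))
  have hpo := isPushout_of_exact φ hκε hS
  exact ⟨hpo.desc σ f hσ, hpo.inr_desc _ _ _⟩

theorem BalancedPair.leftAcyclic_of_rightAcyclic (hbp : BalancedPair 𝒳 𝒴)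
    (hadm : Admissible 𝒳 𝒴) {C : Cx A} (hC : RightAcyclic 𝒳 C) : LeftAcyclic 𝒴 C := by
  have hcov := hbp.exists_epi hadm
  have h := rightAcyclic_iff_exactHomFrom.1 hC
  refine leftAcyclic_iff_exactHomTo.2 fun i j k hi hk => ?_
  have hS := h j k (k - 1) (by omega) rfl
  have : Epi (kernel.lift (C.d k (k - 1)) (C.d j k) (C.d_comp_d _ _ _)) := hS.epi_kernelLift hcov
  refine (exactHomTo_iff_isLeftApprox ((h i j k hi hk).exact hcov)
    (kernel.lift_ι (C.d k (k - 1)) (C.d j k) _)).2 ?_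
  exact hbp.isLeftApprox_of_isRightApprox hadm (exact_kernelι_kernelLift _)
    (h k (k - 1) (k - 2) (by omega) (by omega)).isRightApprox_kernelLift

end Balanced

section Duality

open Opposite

variable {𝒮 𝒳 𝒴 : Set A}

/-- Reindexing by `n ↦ -1 - n` rather than `n ↦ -n` exchanges the degree conventions of
`IsAugXRes` (`M` in degree `-1`) and `IsAugYCores` (`M` in degree `0`). -/
def opCx (C : Cx A) : Cx Aᵒᵖ where
  X n := op (C.X (-1 - n))
  d i j := (C.d (-1 - j) (-1 - i)).op
  shape i j hij := by
    rw [C.shape, op_zero]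
    simp only [ComplexShape.down_Rel] at *
    omega
  d_comp_d' i j k _ _ := by rw [← op_comp, C.d_comp_d, op_zero]

theorem opCx_sc' (C : Cx A) (i j k : ℤ) :
    (opCx C).sc' i j k = (C.sc' (-1 - k) (-1 - j) (-1 - i)).op := rfl

theorem exactHomFrom_op_iff {S : ShortComplex A} : ExactHomFrom 𝒮.op S.op ↔ ExactHomTo 𝒮 S := by
  constructor
  · intro h Y hY y hy
    obtain ⟨t, ht⟩ := h (X := op Y) hY y.op ((congrArg Quiver.Hom.op hy).trans (op_zero _ _))
    exact ⟨t.unop, congrArg Quiver.Hom.unop ht⟩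
  · intro h X hX x hx
    obtain ⟨t, ht⟩ := h hX x.unop ((congrArg Quiver.Hom.unop hx).trans (unop_zero _ _))
    exact ⟨t.op, congrArg Quiver.Hom.op ht⟩

theorem exactHomTo_op_iff {S : ShortComplex A} : ExactHomTo 𝒮.op S.op ↔ ExactHomFrom 𝒮 S := by
  constructor
  · intro h X hX x hx
    obtain ⟨t, ht⟩ := h (Y := op X) hX x.op ((congrArg Quiver.Hom.op hx).trans (op_zero _ _))
    exact ⟨t.unop, congrArg Quiver.Hom.unop ht⟩
  · intro h Y hY y hy
    obtain ⟨t, ht⟩ := h hY y.unop ((congrArg Quiver.Hom.unop hy).trans (unop_zero _ _))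
    exact ⟨t.op, congrArg Quiver.Hom.op ht⟩

theorem rightAcyclic_opCx_iff {C : Cx A} : RightAcyclic 𝒮.op (opCx C) ↔ LeftAcyclic 𝒮 C := by
  simp only [rightAcyclic_iff_exactHomFrom, leftAcyclic_iff_exactHomTo, opCx_sc',
    exactHomFrom_op_iff]
  exact ⟨fun h i j k hi hk => by
    simpa only [sub_sub_cancel] using h (-1 - k) (-1 - j) (-1 - i) (by omega) (by omega),
    fun h i j k hi hk => h _ _ _ (by omega) (by omega)⟩

theorem leftAcyclic_opCx_iff {C : Cx A} : LeftAcyclic 𝒮.op (opCx C) ↔ RightAcyclic 𝒮 C := by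
  simp only [rightAcyclic_iff_exactHomFrom, leftAcyclic_iff_exactHomTo, opCx_sc',
    exactHomTo_op_iff]
  exact ⟨fun h i j k hi hk => by
    simpa only [sub_sub_cancel] using h (-1 - k) (-1 - j) (-1 - i) (by omega) (by omega),
    fun h i j k hi hk => h _ _ _ (by omega) (by omega)⟩

theorem IsAugXRes.op {M : A} {R : Cx A} (h : IsAugXRes 𝒮 M R) :
    IsAugYCores 𝒮.op (op M) (opCx R) := by
  obtain ⟨hmem, hzero, ⟨φ⟩⟩ := h
  exact ⟨fun n hn => hmem _ (by omega), fun n hn => (hzero _ (by omega)).op,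
    ⟨(R.XIsoOfEq (by norm_num) ≪≫ φ).op.symm⟩⟩

theorem IsAugYCores.op {M : A} {R : Cx A} (h : IsAugYCores 𝒮 M R) :
    IsAugXRes 𝒮.op (op M) (opCx R) := by
  obtain ⟨hmem, hzero, ⟨φ⟩⟩ := h
  exact ⟨fun n hn => hmem _ (by omega), fun n hn => (hzero _ (by omega)).op,
    ⟨(R.XIsoOfEq (by norm_num) ≪≫ φ).op.symm⟩⟩

theorem isRightApprox_op_iff {D : Type*} [Category D] {𝒮 : Set D} {M Y : D} {f : M ⟶ Y} :
    IsRightApprox 𝒮.op f.op ↔ IsLeftApprox 𝒮 f := by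
  constructor
  · intro h Y' hY' g
    obtain ⟨t, ht⟩ := h (X' := op Y') hY' g.op
    exact ⟨t.unop, Quiver.Hom.op_inj ht⟩
  · intro h Y' hY' g
    obtain ⟨t, ht⟩ := h hY' g.unop
    exact ⟨t.op, Quiver.Hom.unop_inj ht⟩

theorem isLeftApprox_op_iff {D : Type*} [Category D] {𝒮 : Set D} {X M : D} {f : X ⟶ M} :
    IsLeftApprox 𝒮.op f.op ↔ IsRightApprox 𝒮 f := by
  constructor
  · intro h X' hX' g
    obtain ⟨t, ht⟩ := h (Y' := op X') hX' g.op
    exact ⟨t.unop, Quiver.Hom.op_inj ht⟩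
  · intro h X' hX' g
    obtain ⟨t, ht⟩ := h hX' g.unop
    exact ⟨t.op, Quiver.Hom.unop_inj ht⟩

theorem BalancedPair.op (hbp : BalancedPair 𝒳 𝒴) : BalancedPair 𝒴.op 𝒳.op where
  isoClosedX _ _ hY e := hbp.isoClosedY hY e.unop.symm
  isoClosedY _ _ hX e := hbp.isoClosedX hX e.unop.symm
  summandClosedX _ _ hY s r hsr :=
    hbp.summandClosedY hY r.unop s.unop (by rw [← unop_comp, hsr, unop_id])
  summandClosedY _ _ hX s r hsr :=
    hbp.summandClosedX hX r.unop s.unop (by rw [← unop_comp, hsr, unop_id])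
  contravariantlyFinite M := by
    obtain ⟨Y, hY, f, hf⟩ := hbp.covariantlyFinite M.unop
    exact ⟨Opposite.op Y, hY, f.op, isRightApprox_op_iff.2 hf⟩
  covariantlyFinite M := by
    obtain ⟨X, hX, f, hf⟩ := hbp.contravariantlyFinite M.unop
    exact ⟨Opposite.op X, hX, f.op, isLeftApprox_op_iff.2 hf⟩
  resolution M := by
    obtain ⟨R, hR, hr, hl⟩ := hbp.coresolution M.unop
    exact ⟨opCx R, hR.op, rightAcyclic_opCx_iff.2 hl, leftAcyclic_opCx_iff.2 hr⟩
  coresolution M := by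
    obtain ⟨R, hR, hr, hl⟩ := hbp.resolution M.unop
    exact ⟨opCx R, hR.op, rightAcyclic_opCx_iff.2 hl, leftAcyclic_opCx_iff.2 hr⟩

theorem Admissible.op {D : Type*} [Category D] {𝒳 𝒴 : Set D} (hadm : Admissible 𝒳 𝒴) :
    Admissible 𝒴.op 𝒳.op :=
  ⟨fun _ _ hY f hf =>
    have := hadm.2 hY f.unop (isRightApprox_op_iff.1 hf)
    inferInstanceAs (Epi f.unop.op),
  fun _ _ hX f hf =>
    have := hadm.1 hX f.unop (isLeftApprox_op_iff.1 hf)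
    inferInstanceAs (Mono f.unop.op)⟩

end Duality

/-- For an admissible balanced pair `(𝒳, 𝒴)`, a complex is right
`𝒳`-acyclic if and only if it is left `𝒴`-acyclic. -/
theorem stmt_4 {A : Type u} [Category.{v} A] [Abelian A]
    (𝒳 𝒴 : Set A) (hbp : BalancedPair 𝒳 𝒴) (hadm : Admissible 𝒳 𝒴) (C : Cx A) :
    RightAcyclic 𝒳 C ↔ LeftAcyclic 𝒴 C :=
  ⟨hbp.leftAcyclic_of_rightAcyclic hadm, fun h => leftAcyclic_opCx_iff.1
    (hbp.op.leftAcyclic_of_rightAcyclic hadm.op (rightAcyclic_opCx_iff.2 h))⟩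

end Paper
end

section
/- Let (X, Y) be an admissible balanced pair in an abelian category A, and let E be the class of short exact sequences in A that remain exact after applying Hom_A(X, −) for all X ∈ X. If an object Z of A has the property that Hom_A(Z, −) sends every right X-acyclic complex to an acyclic complex, then Z belongs to X. Consequently, X is closed under arbitrary direct sums. -/
open CategoryTheory Category Limits ZeroObject

universe v u

namespace Paper

variable {A : Type u} [Category.{v} A] [Abelian A]

/-
Feeding an augmented `𝒳`-resolution `⋯ → X₀ → Z → 0` (which is right `𝒳`-acyclic) to the
hypothesis lifts `𝟙 Z` along `X₀ → Z`, so `Z` is a direct summand of `X₀ ∈ 𝒳`. A coproduct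
of objects of `𝒳` satisfies the hypothesis since `Hom(∐ Xᵢ, -) = ∏ Hom(Xᵢ, -)`.
-/

theorem isSplitEpi_d_comp_of_rightAcyclicAt {M : A} {R : Cx A} {n : ℤ}
    (hR : RightAcyclicAt {M} R n) (hzero : IsZero (R.X (n - 1))) (e : R.X n ≅ M) :
    IsSplitEpi (R.d (n + 1) n ≫ e.hom) := by
  obtain ⟨s, hs⟩ := hR (Set.mem_singleton M) e.inv (hzero.eq_of_tgt _ _)
  exact IsSplitEpi.mk' ⟨s, by rw [← assoc, hs, e.inv_hom_id]⟩

theorem RightAcyclicAt.sigma {ι : Type*} {𝒳 : Set A} {g : ι → A} [HasCoproduct g]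
    {E : Cx A} {n : ℤ} (hg : ∀ i, g i ∈ 𝒳) (hE : RightAcyclicAt 𝒳 E n) :
    RightAcyclicAt {∐ g} E n := by
  rintro _ rfl f hf
  choose h hh using fun i => hE (hg i) (Sigma.ι g i ≫ f) (by rw [assoc, hf, comp_zero])
  exact ⟨Sigma.desc h, Sigma.hom_ext _ _ fun i => by simpa using hh i⟩

namespace BalancedPair

variable {𝒳 𝒴 : Set A} (hbp : BalancedPair 𝒳 𝒴)
include hbp

theorem mem_of_isSplitEpi {X S : A} (hX : X ∈ 𝒳) (f : X ⟶ S) [IsSplitEpi f] : S ∈ 𝒳 :=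
  hbp.summandClosedX hX (section_ f) f (IsSplitEpi.id f)

theorem mem_of_forall_rightAcyclic_singleton {Z : A}
    (hZ : ∀ E : Cx A, RightAcyclic 𝒳 E → RightAcyclic {Z} E) : Z ∈ 𝒳 := by
  obtain ⟨R, ⟨hmem, hzero, ⟨e⟩⟩, hR, -⟩ := hbp.resolution Z
  have := isSplitEpi_d_comp_of_rightAcyclicAt (hZ R hR (-1)) (hzero _ (by omega)) e
  exact hbp.mem_of_isSplitEpi (hmem (-1 + 1) (by omega)) (R.d (-1 + 1) (-1) ≫ e.hom)

end BalancedPair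

theorem stmt_5_general {A : Type u} [Category.{v} A] [Abelian A] [HasColimits A]
    (𝒳 𝒴 : Set A) (hbp : BalancedPair 𝒳 𝒴) :
    (∀ Z : A, (∀ E : Cx A, RightAcyclic 𝒳 E → RightAcyclic {Z} E) → Z ∈ 𝒳) ∧
    (∀ (ι : Type v) (g : ι → A), (∀ i, g i ∈ 𝒳) → (∐ g) ∈ 𝒳) :=
  ⟨fun _ => hbp.mem_of_forall_rightAcyclic_singleton, fun _ _ hg =>
    hbp.mem_of_forall_rightAcyclic_singleton fun _ hE n => (hE n).sigma hg⟩

/-- If `Hom_A(Z, -)` sends every right `𝒳`-acyclic complex to an acyclic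
complex then `Z ∈ 𝒳`; consequently `𝒳` is closed under arbitrary direct sums. -/
theorem stmt_5 {A : Type u} [Category.{v} A] [Abelian A] [HasColimits A]
    (𝒳 𝒴 : Set A) (hbp : BalancedPair 𝒳 𝒴) (hadm : Admissible 𝒳 𝒴) :
    (∀ Z : A, (∀ E : Cx A, RightAcyclic 𝒳 E → RightAcyclic {Z} E) → Z ∈ 𝒳) ∧
    (∀ (ι : Type v) (g : ι → A), (∀ i, g i ∈ 𝒳) → (∐ g) ∈ 𝒳) :=
  stmt_5_general 𝒳 𝒴 hbp

end Paper
end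

section
/- Let (X, Z, Y) be a complete hereditary cotorsion triple in a Grothendieck category A, with induced exact structure E (right X-acyclic short exact sequences). Then dgX̃ = E-dwX̃ if and only if E-dgX̃ = E-dwX̃, where E-dwX̃ is the class of complexes with terms in X, dgX̃ is the class of such complexes whose maps to acyclic complexes with cycles in Z are null homotopic, and E-dgX̃ is the class of such complexes whose maps to all right X-acyclic complexes are null homotopic. -/
/-!
Acyclic complexes with cycles in `𝒵` are right `𝒳`-acyclic, so `E-dg X̃ ⊆ dg X̃`; this gives one
direction. For the other, let `G` have terms in `𝒳` and let `f : G ⟶ E` with `E` right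
`𝒳`-acyclic. Special `𝒳`-precovers `0 → C_j → F_j → Z_j E → 0` with `C_j ∈ 𝒵`, together with lifts
`r_j : F_j → E_{j+1}` of `p_j : F_j → Z_j E ⊆ E_j`, let `f` factor degreewise as
`f_{j+1} = a_j r_j + b_j p_{j+1}`, i.e. through the contractible sum of the disks on the `F_j`.
The obstruction to `(a, b)` being a chain map is a chain map from `G` shifted by two into the
complex of pullbacks `K_j = F_j ×_{E_{j+1}} F_{j+1}`, which is acyclic with cycles `C_{j+2} ∈ 𝒵`. Since
`dg X̃ = E-dw X̃` it is null homotopic, and the homotopy corrects `(a, b)` to a factorisation of `f`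
through a contractible complex.
-/

open CategoryTheory Category Limits ZeroObject

universe v u

namespace Paper

variable {A : Type u} [Category.{v} A] [Abelian A]

variable {A : Type u} [Category.{v} A] [Abelian A]

/-- The class `Z̃` of acyclic complexes with all cycles in `𝒵`. -/
def Ztilde (𝒵 : Set A) : Set (Cx A) :=
  {C | AcyclicCx C ∧ ∀ n : ℤ, kernel (C.d n (n - 1)) ∈ 𝒵}

/-- The class `dg X̃`: complexes with terms in `𝒳` all of whose maps to complexes in `Z̃`
are null homotopic. -/
def dgXZ (𝒳 𝒵 : Set A) : Set (Cx A) :=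
  {G | (∀ n : ℤ, G.X n ∈ 𝒳) ∧ ∀ Z ∈ Ztilde 𝒵, ∀ f : G ⟶ Z, NullHomotopic f}

lemma nullHomotopic_iff {X Y : Cx A} (f : X ⟶ Y) :
    NullHomotopic f ↔ ∃ s : ∀ i, X.X i ⟶ Y.X (i + 1),
      ∀ j, f.f (j + 1) = X.d (j + 1) j ≫ s j + s (j + 1) ≫ Y.d (j + 1 + 1) (j + 1) := by
  constructor
  · rintro ⟨h⟩
    refine ⟨fun i => h.hom i (i + 1), fun j => ?_⟩
    simpa [dNext_eq h.hom (show (ComplexShape.down ℤ).Rel (j + 1) j by simp),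
      prevD_eq h.hom (show (ComplexShape.down ℤ).Rel (j + 1 + 1) (j + 1) by simp)]
      using h.comm (j + 1)
  · rintro ⟨s, hs⟩
    let hom : ∀ i j, (ComplexShape.down ℤ).Rel j i → (X.X i ⟶ Y.X j) :=
      fun i j h => s i ≫ eqToHom (congrArg Y.X h)
    refine ⟨(Homotopy.ofEq ?_).trans (Homotopy.nullHomotopy' hom)⟩
    ext k
    obtain ⟨j, rfl⟩ : ∃ j, k = j + 1 := ⟨k - 1, by omega⟩
    rw [Homotopy.nullHomotopicMap'_f (k₂ := j + 1 + 1) (k₀ := j) rfl rfl, hs j]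
    simp [hom]

lemma exists_extend_of_bijective {C : Type*} [Category C] {P Q : ℤ → C} {φ : ℤ → ℤ}
    (hφ : φ.Bijective) (σ : ∀ i, P (φ i) ⟶ Q (φ i)) : ∃ χ : ∀ j, P j ⟶ Q j, ∀ i, χ (φ i) = σ i := by
  choose ψ hψ using hφ.2
  refine ⟨fun j => eqToHom (congrArg P (hψ j).symm) ≫ σ (ψ j) ≫ eqToHom (congrArg Q (hψ j)),
    fun i => ?_⟩
  have key : ∀ j (h : φ j = φ i),
      eqToHom (congrArg P h.symm) ≫ σ j ≫ eqToHom (congrArg Q h) = σ i := by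
    intro j h
    obtain rfl := hφ.1 h
    simp
  exact key _ (hψ _)

abbrev shiftTwo (G : Cx A) : Cx A :=
  ChainComplex.of (fun j => G.X (j + 1 + 1)) (fun j => G.d (j + 1 + 1 + 1) (j + 1 + 1))
    fun _ => G.d_comp_d _ _ _

lemma shiftTwo_d (G : Cx A) (j : ℤ) :
    (shiftTwo G).d (j + 1) j = G.d (j + 1 + 1 + 1) (j + 1 + 1) :=
  ChainComplex.of_d (fun j => G.X (j + 1 + 1)) (fun j => G.d (j + 1 + 1 + 1) (j + 1 + 1)) j

lemma Ext1Vanish.exists_lift {C W M X : A} (hv : Ext1Vanish X C) {i : C ⟶ W} {p : W ⟶ M}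
    {w : i ≫ p = 0} (se : (ShortComplex.mk i p w).ShortExact) (g : X ⟶ M) :
    ∃ h : X ⟶ W, h ≫ p = g := by
  have := se.mono_f
  have := se.epi_g
  let i' : C ⟶ pullback p g := pullback.lift i 0 (by rw [w, zero_comp])
  have hi'₁ : i' ≫ pullback.fst p g = i := pullback.lift_fst _ _ _
  have hi'₂ : i' ≫ pullback.snd p g = 0 := pullback.lift_snd _ _ _
  have se' : (ShortComplex.mk i' (pullback.snd p g) hi'₂).ShortExact := by
    have : Mono i' := mono_of_mono_fac hi'₁
    refine ⟨?_⟩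
    rw [ShortComplex.exact_iff_exact_up_to_refinements]
    intro T x (hx : x ≫ pullback.snd p g = 0)
    obtain ⟨T', π, hπ, y, hy⟩ := se.exact.exact_up_to_refinements (x ≫ pullback.fst p g)
      (by rw [assoc, pullback.condition, ← assoc, hx, zero_comp])
    refine ⟨T', π, hπ, y, pullback.hom_ext ?_ ?_⟩
    · rw [assoc, assoc, hi'₁]; exact hy
    · rw [assoc, assoc, hi'₂, hx, comp_zero, comp_zero]
  obtain ⟨r, hr⟩ := hv i' _ hi'₂ se'
  let σ := ShortComplex.Splitting.ofExactOfRetraction _ se'.exact r hr se'.epi_g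
  exact ⟨σ.s ≫ pullback.fst p g, by rw [assoc, pullback.condition, ← assoc, σ.s_g, id_comp]⟩

lemma CotorsionPair.mem_right_of_iso {𝒳 𝒵 : Set A} (hp : CotorsionPair 𝒳 𝒵) {Z Z' : A}
    (e : Z ≅ Z') (hZ : Z ∈ 𝒵) : Z' ∈ 𝒵 := by
  refine (hp.2 Z').2 fun X hX W i p w se => ?_
  have w' : (e.hom ≫ i) ≫ p = 0 := by rw [assoc, w, comp_zero]
  obtain ⟨r, hr⟩ := (hp.2 Z).1 hZ X hX _ p w' <| ShortComplex.shortExact_of_iso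
    (ShortComplex.isoMk (S₁ := ShortComplex.mk _ _ w') (S₂ := ShortComplex.mk _ _ w) e
      (Iso.refl _) (Iso.refl _)).symm se
  refine ⟨r ≫ e.hom, ?_⟩
  rw [← cancel_epi e.hom, ← assoc, ← assoc, hr, id_comp, comp_id]

lemma rightAcyclicAt_of_exactAt {𝒳 : Set A} {C : Cx A} {n : ℤ} (hC : C.ExactAt n)
    (hv : ∀ X ∈ 𝒳, Ext1Vanish X (kernel (C.d (n + 1) n))) : RightAcyclicAt 𝒳 C n := by
  intro X hX g hg
  let p : C.X (n + 1) ⟶ kernel (C.d n (n - 1)) := kernel.lift _ _ (C.d_comp_d _ _ _)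
  have hp : p ≫ kernel.ι _ = C.d (n + 1) n := kernel.lift_ι _ _ _
  have w : kernel.ι (C.d (n + 1) n) ≫ p = 0 := by
    rw [← cancel_mono (kernel.ι (C.d n (n - 1))), assoc, hp, kernel.condition, zero_comp]
  have se : (ShortComplex.mk _ _ w).ShortExact :=
    { exact := ShortComplex.exact_of_f_is_kernel _
        (isKernelOfComp _ _ (kernelIsKernel (C.d (n + 1) n)) w hp)
      epi_g := (ShortComplex.exact_iff_epi_kernel_lift _).1 <|
        (C.exactAt_iff' (n + 1) n (n - 1) (by simp) (by simp)).1 hC }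
  obtain ⟨h, hh⟩ := (hv X hX).exists_lift se (kernel.lift _ g hg)
  exact ⟨h, by simpa [hp] using hh =≫ kernel.ι _⟩

lemma kernel_d_mem_iff_of_eq {S : Set A} {C : Cx A} {i j j' : ℤ} (h : j = j') :
    kernel (C.d i j) ∈ S ↔ kernel (C.d i j') ∈ S := by
  subst h; rfl

lemma ztilde_subset_etilde {𝒳 𝒵 : Set A} (hp : CotorsionPair 𝒳 𝒵) : Ztilde 𝒵 ⊆ Etilde 𝒳 := by
  rintro C ⟨hC, hker⟩ n
  refine rightAcyclicAt_of_exactAt (hC n) fun X hX => (hp.2 _).1 ?_ X hX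
  exact (kernel_d_mem_iff_of_eq (add_sub_cancel_right n 1)).1 (hker (n + 1))

lemma edgX_subset_dgXZ {𝒳 𝒵 : Set A} (hp : CotorsionPair 𝒳 𝒵) : EdgX 𝒳 ⊆ dgXZ 𝒳 𝒵 :=
  fun _ hG => ⟨hG.1, fun Z hZ f => hG.2 Z (ztilde_subset_etilde hp hZ) f⟩

structure CyclesPrecover (𝒳 𝒵 : Set A) (E : Cx A) where
  F : ℤ → A
  C : ℤ → A
  κ : ∀ j, C j ⟶ F j
  π : ∀ j, F j ⟶ E.cycles j
  κ_π : ∀ j, κ j ≫ π j = 0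
  shortExact : ∀ j, (ShortComplex.mk (κ j) (π j) (κ_π j)).ShortExact
  F_mem : ∀ j, F j ∈ 𝒳
  C_mem : ∀ j, C j ∈ 𝒵
  r : ∀ j, F j ⟶ E.X (j + 1)
  r_d : ∀ j, r j ≫ E.d (j + 1) j = π j ≫ E.iCycles j

namespace CyclesPrecover

variable {𝒳 𝒵 : Set A} {E : Cx A}

lemma nonempty (hc : CompletePair 𝒳 𝒵) (hE : E ∈ Etilde 𝒳) :
    Nonempty (CyclesPrecover 𝒳 𝒵 E) := by
  choose C F κ π w hse hF hC using fun j => hc.1 (E.cycles j)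
  choose r hr using fun j => hE j (hF j) (π j ≫ E.iCycles j) (by simp)
  exact ⟨⟨F, C, κ, π, w, hse, hF, hC, r, hr⟩⟩

variable (P : CyclesPrecover 𝒳 𝒵 E)

noncomputable def p (j : ℤ) : P.F j ⟶ E.X j := P.π j ≫ E.iCycles j

@[simp] lemma p_d (j k : ℤ) : P.p j ≫ E.d j k = 0 := by simp [p]

@[simp] lemma κ_p (j : ℤ) : P.κ j ≫ P.p j = 0 := by rw [p, ← assoc, P.κ_π, zero_comp]

@[simp] lemma r_d_eq_p (j : ℤ) : P.r j ≫ E.d (j + 1) j = P.p j := P.r_d j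

lemma exists_lift_p (hp : CotorsionPair 𝒳 𝒵) {j k : ℤ} (hjk : k + 1 = j) {X : A} (hX : X ∈ 𝒳)
    (g : X ⟶ E.X j) (hg : g ≫ E.d j k = 0) : ∃ a : X ⟶ P.F j, a ≫ P.p j = g := by
  obtain ⟨a, ha⟩ := ((hp.1 X).1 hX _ (P.C_mem j)).exists_lift (P.shortExact j)
    (E.liftCycles g k ((ComplexShape.down ℤ).next_eq' hjk) hg)
  exact ⟨a, by rw [p, ← assoc, ha, HomologicalComplex.liftCycles_i]⟩

lemma exists_refinement_p {j k : ℤ} (hjk : k + 1 = j) {T : A} (g : T ⟶ E.X j)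
    (hg : g ≫ E.d j k = 0) :
    ∃ (T' : A) (ρ : T' ⟶ T) (_ : Epi ρ) (c : T' ⟶ P.F j), ρ ≫ g = c ≫ P.p j := by
  have := (P.shortExact j).epi_g
  obtain ⟨T', ρ, hρ, c, hc⟩ := surjective_up_to_refinements_of_epi (P.π j)
    (E.liftCycles g k ((ComplexShape.down ℤ).next_eq' hjk) hg)
  exact ⟨T', ρ, hρ, c, by rw [p, ← assoc, ← hc, assoc, HomologicalComplex.liftCycles_i]⟩

lemma exists_factor_κ {j : ℤ} {T : A} (y : T ⟶ P.F j) (hy : y ≫ P.p j = 0) :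
    ∃ c : T ⟶ P.C j, c ≫ P.κ j = y := by
  have := (P.shortExact j).mono_f
  have hy' : y ≫ P.π j = 0 := by rw [← cancel_mono (E.iCycles j), assoc, zero_comp]; exact hy
  exact ⟨(P.shortExact j).exact.lift y hy', (P.shortExact j).exact.lift_f y hy'⟩

noncomputable abbrev K (j : ℤ) : A := pullback (P.r j) (P.p (j + 1))

lemma fst_p (j : ℤ) : pullback.fst (P.r (j + 1)) (P.p (j + 1 + 1)) ≫ P.p (j + 1) = 0 := by
  rw [← P.r_d_eq_p (j + 1), ← assoc, pullback.condition, assoc, p_d, comp_zero]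

noncomputable def dK (j : ℤ) : P.K (j + 1) ⟶ P.K j :=
  pullback.lift 0 (pullback.fst _ _) (by rw [zero_comp, P.fst_p])

@[simp] lemma dK_fst (j : ℤ) : P.dK j ≫ pullback.fst _ _ = 0 := pullback.lift_fst _ _ _

@[simp] lemma dK_snd (j : ℤ) : P.dK j ≫ pullback.snd _ _ = pullback.fst _ _ :=
  pullback.lift_snd _ _ _

lemma comp_dK_eq_zero_iff {j : ℤ} {T : A} (x : T ⟶ P.K (j + 1)) :
    x ≫ P.dK j = 0 ↔ x ≫ pullback.fst _ _ = 0 := by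
  constructor
  · intro h; simpa using h =≫ pullback.snd _ _
  · intro h; ext <;> simp [h]

noncomputable abbrev complexK : Cx A :=
  ChainComplex.of P.K P.dK fun j => by ext <;> simp

lemma complexK_d (j : ℤ) : P.complexK.d (j + 1) j = P.dK j := ChainComplex.of_d _ _ _

lemma exists_refinement_dK {j : ℤ} {T : A} (x : T ⟶ P.K (j + 1)) (hx : x ≫ P.dK j = 0) :
    ∃ (T' : A) (ρ : T' ⟶ T) (_ : Epi ρ) (z : T' ⟶ P.K (j + 1 + 1)), ρ ≫ x = z ≫ P.dK (j + 1) := by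
  rw [comp_dK_eq_zero_iff] at hx
  let b := x ≫ pullback.snd (P.r (j + 1)) (P.p (j + 1 + 1))
  have hb : b ≫ P.p (j + 1 + 1) = 0 := by
    rw [assoc, ← pullback.condition, ← assoc, hx, zero_comp]
  obtain ⟨T', ρ, hρ, c, hc⟩ := P.exists_refinement_p rfl (b ≫ P.r (j + 1 + 1))
    (by rw [assoc, r_d_eq_p, hb])
  refine ⟨T', ρ, hρ, pullback.lift (ρ ≫ b) c (by rw [assoc, hc]), ?_⟩
  ext
  · simp [b, hx]
  · simp only [assoc, dK_snd]
    exact (pullback.lift_fst _ _ _).symm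

lemma complexK_exactAt (j : ℤ) : P.complexK.ExactAt (j + 1) := by
  rw [P.complexK.exactAt_iff' (j + 1 + 1) (j + 1) j (by simp) (by simp),
    ShortComplex.exact_iff_exact_up_to_refinements]
  intro T x hx
  change x ≫ P.complexK.d (j + 1) j = 0 at hx
  rw [complexK_d] at hx
  obtain ⟨T', ρ, hρ, z, hz⟩ := P.exists_refinement_dK x hx
  exact ⟨T', ρ, hρ, z, by change _ = z ≫ P.complexK.d _ _; rw [complexK_d]; exact hz⟩

noncomputable def cyclesι (j : ℤ) : P.C (j + 1 + 1) ⟶ P.K (j + 1) :=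
  pullback.lift 0 (P.κ _) (by simp)

@[simp] lemma cyclesι_fst (j : ℤ) : P.cyclesι j ≫ pullback.fst _ _ = 0 := pullback.lift_fst _ _ _

@[simp] lemma cyclesι_snd (j : ℤ) : P.cyclesι j ≫ pullback.snd _ _ = P.κ _ :=
  pullback.lift_snd _ _ _

lemma cyclesι_dK (j : ℤ) : P.cyclesι j ≫ P.dK j = 0 := by
  rw [P.comp_dK_eq_zero_iff, cyclesι_fst]

noncomputable def cyclesIsKernel (j : ℤ) :
    IsLimit (KernelFork.ofι (P.cyclesι j) (P.cyclesι_dK j)) := by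
  have := (P.shortExact (j + 1 + 1)).mono_f
  have : Mono (P.cyclesι j) := mono_of_mono_fac (P.cyclesι_snd j)
  refine ShortComplex.Exact.fIsKernel (S := ShortComplex.mk _ _ (P.cyclesι_dK j)) ?_
  rw [ShortComplex.exact_iff_exact_up_to_refinements]
  intro T x hx
  replace hx : x ≫ pullback.fst _ _ = 0 := (P.comp_dK_eq_zero_iff x).1 hx
  obtain ⟨c, hc⟩ := P.exists_factor_κ (x ≫ pullback.snd _ _)
    (by rw [assoc, ← pullback.condition, ← assoc, hx, zero_comp])
  exact ⟨T, 𝟙 T, inferInstance, c, by ext <;> simp [hx, hc]⟩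

lemma complexK_mem_Ztilde (hp : CotorsionPair 𝒳 𝒵) : P.complexK ∈ Ztilde 𝒵 := by
  refine ⟨fun n => ?_, fun n => ?_⟩ <;> obtain ⟨j, rfl⟩ : ∃ j, n = j + 1 := ⟨n - 1, by omega⟩
  · exact P.complexK_exactAt j
  · have e := (P.cyclesIsKernel j).conePointUniqueUpToIso (kernelIsKernel (P.dK j))
    rw [kernel_d_mem_iff_of_eq (add_sub_cancel_right j 1), complexK_d]
    exact hp.mem_right_of_iso e (P.C_mem _)

variable {G : Cx A}

lemma exists_decomposition (hp : CotorsionPair 𝒳 𝒵) (hG : ∀ n, G.X n ∈ 𝒳) (f : G ⟶ E) :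
    ∃ (a : ∀ j, G.X (j + 1) ⟶ P.F j) (b : ∀ j, G.X (j + 1) ⟶ P.F (j + 1)),
      (∀ j, a j ≫ P.p j = f.f (j + 1) ≫ E.d (j + 1) j) ∧
      ∀ j, f.f (j + 1) = a j ≫ P.r j + b j ≫ P.p (j + 1) := by
  choose a ha using fun j => P.exists_lift_p hp (k := j - 1) (by omega) (hG (j + 1))
    (f.f (j + 1) ≫ E.d (j + 1) j) (by simp)
  choose b hb using fun j => P.exists_lift_p hp (j := j + 1) rfl (hG (j + 1))
    (f.f (j + 1) - a j ≫ P.r j) (by simp [Preadditive.sub_comp, ha])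
  exact ⟨a, b, ha, fun j => by rw [hb, add_sub_cancel]⟩

variable {f : G ⟶ E} {a : ∀ j, G.X (j + 1) ⟶ P.F j} {b : ∀ j, G.X (j + 1) ⟶ P.F (j + 1)}

lemma obstruction_condition (ha : ∀ j, a j ≫ P.p j = f.f (j + 1) ≫ E.d (j + 1) j)
    (hb : ∀ j, f.f (j + 1) = a j ≫ P.r j + b j ≫ P.p (j + 1)) (j : ℤ) :
    (G.d (j + 1 + 1) (j + 1) ≫ a j) ≫ P.r j =
      (a (j + 1) - G.d (j + 1 + 1) (j + 1) ≫ b j) ≫ P.p (j + 1) := by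
  have hr : a j ≫ P.r j = f.f (j + 1) - b j ≫ P.p (j + 1) := by rw [hb j, add_sub_cancel_right]
  rw [assoc, hr, Preadditive.sub_comp, ha, Preadditive.comp_sub, ← f.comm, assoc]

noncomputable def obstruction (ha : ∀ j, a j ≫ P.p j = f.f (j + 1) ≫ E.d (j + 1) j)
    (hb : ∀ j, f.f (j + 1) = a j ≫ P.r j + b j ≫ P.p (j + 1)) : shiftTwo G ⟶ P.complexK :=
  ChainComplex.ofHom (fun j => pullback.lift (G.d (j + 1 + 1) (j + 1) ≫ a j)
      (a (j + 1) - G.d (j + 1 + 1) (j + 1) ≫ b j) (P.obstruction_condition ha hb j))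
    fun j => by
      rw [complexK_d, shiftTwo_d]
      ext <;> simp [pullback.lift_fst, pullback.lift_snd, Preadditive.comp_sub]

lemma exists_contraction (ha : ∀ j, a j ≫ P.p j = f.f (j + 1) ≫ E.d (j + 1) j)
    (hb : ∀ j, f.f (j + 1) = a j ≫ P.r j + b j ≫ P.p (j + 1))
    (hT : NullHomotopic (P.obstruction ha hb)) :
    ∃ s : ∀ i, G.X i ⟶ P.F i,
      ∀ j, f.f (j + 1) = G.d (j + 1) j ≫ s j ≫ P.r j + s (j + 1) ≫ P.p (j + 1) := by
  obtain ⟨σ, hσ⟩ : ∃ σ : ∀ i, G.X (i + 1 + 1) ⟶ P.K (i + 1), ∀ j,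
      (P.obstruction ha hb).f (j + 1) =
        (shiftTwo G).d (j + 1) j ≫ σ j + σ (j + 1) ≫ P.complexK.d (j + 1 + 1) (j + 1) :=
    (nullHomotopic_iff _).1 hT
  -- the chain condition `a' = d ≫ b'` for `a' := a - σ ≫ fst` and `b' := b + σ ≫ snd`
  have key : ∀ i, G.d (i + 1 + 1 + 1) (i + 1 + 1) ≫ (b (i + 1) + σ i ≫ pullback.snd _ _) +
      σ (i + 1) ≫ pullback.fst _ _ = a (i + 1 + 1) := by
    intro i
    have := hσ i =≫ pullback.snd _ _
    simp only [obstruction, ChainComplex.of_d, Preadditive.add_comp, assoc, dK_snd,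
      pullback.lift_snd] at this
    rw [sub_eq_iff_eq_add'] at this
    rw [this, Preadditive.comp_add]
    abel
  obtain ⟨s, hs⟩ := exists_extend_of_bijective (P := G.X) (Q := P.F) (φ := fun i => i + 1 + 1)
    ⟨fun _ _ h => by simpa using h, fun j => ⟨j - 1 - 1, by ring⟩⟩
    (fun i => b (i + 1) + σ i ≫ pullback.snd _ _)
  refine ⟨s, fun j => ?_⟩
  obtain ⟨i, rfl⟩ : ∃ i, j = i + 1 + 1 := ⟨j - 1 - 1, by ring⟩
  rw [hs i, hs (i + 1)]
  calc f.f (i + 1 + 1 + 1) = a (i + 1 + 1) ≫ P.r _ + b (i + 1 + 1) ≫ P.p _ := hb _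
    _ = (G.d _ _ ≫ (b (i + 1) + σ i ≫ pullback.snd _ _) + σ (i + 1) ≫ pullback.fst _ _) ≫ P.r _
          + b (i + 1 + 1) ≫ P.p _ := by rw [key i]
    _ = _ := by
      simp only [Preadditive.add_comp, Preadditive.comp_add, assoc, pullback.condition]
      abel

end CyclesPrecover

lemma dwX_subset_edgX {𝒳 𝒵 : Set A} (hp : CotorsionPair 𝒳 𝒵) (hc : CompletePair 𝒳 𝒵)
    (h : dwX 𝒳 ⊆ dgXZ 𝒳 𝒵) : dwX 𝒳 ⊆ EdgX 𝒳 := by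
  intro G hG
  refine ⟨hG, fun E hE f => ?_⟩
  obtain ⟨P⟩ := CyclesPrecover.nonempty hc hE
  obtain ⟨a, b, ha, hb⟩ := P.exists_decomposition hp hG f
  have hT := (h fun n => hG (n + 1 + 1)).2 _ (P.complexK_mem_Ztilde hp) (P.obstruction ha hb)
  obtain ⟨s, hs⟩ := P.exists_contraction ha hb hT
  exact (nullHomotopic_iff f).2 ⟨fun i => s i ≫ P.r i, fun j => by simp [hs j]⟩

theorem stmt_19_general (𝒳 𝒵 𝒴 : Set A) (ht : CotorsionTriple 𝒳 𝒵 𝒴) :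
    dgXZ 𝒳 𝒵 = dwX 𝒳 ↔ EdgX 𝒳 = dwX 𝒳 := by
  obtain ⟨hp, -, hc, -⟩ := ht
  constructor
  · intro h
    exact Set.Subset.antisymm (fun G hG => hG.1) (dwX_subset_edgX hp hc h.ge)
  · intro h
    exact Set.Subset.antisymm (fun G hG => hG.1) (h ▸ edgX_subset_dgXZ hp)

/-- For a complete hereditary cotorsion triple `(𝒳, 𝒵, 𝒴)` in a
Grothendieck category, `dg X̃ = E-dw X̃` iff `E-dg X̃ = E-dw X̃`. -/
theorem stmt_19 [HasColimits A] [AB5 A] [HasSeparator A]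
    (𝒳 𝒵 𝒴 : Set A) (ht : CotorsionTriple 𝒳 𝒵 𝒴) :
    dgXZ 𝒳 𝒵 = dwX 𝒳 ↔ EdgX 𝒳 = dwX 𝒳 :=
  stmt_19_general 𝒳 𝒵 𝒴 ht

end Paper
end
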